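/- Let p > 1, q = 1/(p−1), and α ∈ (−1, 1). Define A > 0 by A^{p-1} = 2^{p-1} q (1 − α²), C_{φ,α} = ((1−α)/2) A, C_{ψ,α} = ((1+α)/2) A, and set V_φ(y,s) = C_{φ,α} (α y − s)^{-q}, V_ψ(y,s) = C_{ψ,α} (α y − s)^{-q} on the domain {(y,s) : s < α y}. Then (∂_s − ∂_y) V_φ = 2^{-p} (V_φ + V_ψ)^p and (∂_s + ∂_y) V_ψ = 2^{-p} (V_φ + V_ψ)^p on this domain. -/

import Mathlib

open Real Set

theorem selfsimilar_profiles_solve_limiting_system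
    (p α q A Cφ Cψ : ℝ) (hp : 1 < p) (hα : α ∈ Set.Ioo (-1 : ℝ) 1)
    (hq : q = 1 / (p - 1)) (hA : 0 < A)
    (hAe : A ^ (p - 1) = 2 ^ (p - 1) * q * (1 - α ^ 2))
    (hCφ : Cφ = (1 - α) / 2 * A) (hCψ : Cψ = (1 + α) / 2 * A)
    (Vφ Vψ : ℝ × ℝ → ℝ)
    (hVφ : Vφ = fun z : ℝ × ℝ => Cφ * (α * z.1 - z.2) ^ (-q))
    (hVψ : Vψ = fun z : ℝ × ℝ => Cψ * (α * z.1 - z.2) ^ (-q)) :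
    ∀ y s : ℝ, s < α * y →
      (fderiv ℝ Vφ (y, s)) (0, 1) - (fderiv ℝ Vφ (y, s)) (1, 0)
          = (2 : ℝ) ^ (-p) * (Vφ (y, s) + Vψ (y, s)) ^ p ∧
        (fderiv ℝ Vψ (y, s)) (0, 1) + (fderiv ℝ Vψ (y, s)) (1, 0)
          = (2 : ℝ) ^ (-p) * (Vφ (y, s) + Vψ (y, s)) ^ p := by
  intro y s hs
  have hu : 0 < α * y - s := by linarith
  set u := α * y - s with hu_def
  have hp1 : (0:ℝ) < p - 1 := by linarith
  have hq1 : q * (p - 1) = 1 := by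
    rw [hq]; field_simp
  have hqp : q * p = q + 1 := by nlinarith
  -- derivative of the common profile
  have hf : HasFDerivAt (fun z : ℝ × ℝ => α * z.1 - z.2)
      ((α • (ContinuousLinearMap.fst ℝ ℝ ℝ)) - ContinuousLinearMap.snd ℝ ℝ ℝ) (y, s) := by
    exact ((hasFDerivAt_fst.const_mul α).sub hasFDerivAt_snd)
  have key : ∀ C : ℝ, HasFDerivAt (fun z : ℝ × ℝ => C * (α * z.1 - z.2) ^ (-q))
      ((C * (-q * u ^ (-q - 1))) •
        ((α • (ContinuousLinearMap.fst ℝ ℝ ℝ)) - ContinuousLinearMap.snd ℝ ℝ ℝ)) (y, s) := by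
    intro C
    have hr := (Real.hasDerivAt_rpow_const (x := u) (p := -q)
      (Or.inl (ne_of_gt hu))).comp_hasFDerivAt (y, s) hf
    have := hr.const_mul C
    rw [← smul_smul]
    exact this
  -- evaluate fderivs
  have hφ : fderiv ℝ Vφ (y, s) = (Cφ * (-q * u ^ (-q - 1))) •
      ((α • (ContinuousLinearMap.fst ℝ ℝ ℝ)) - ContinuousLinearMap.snd ℝ ℝ ℝ) := by
    rw [hVφ]; exact (key Cφ).fderiv
  have hψ : fderiv ℝ Vψ (y, s) = (Cψ * (-q * u ^ (-q - 1))) •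
      ((α • (ContinuousLinearMap.fst ℝ ℝ ℝ)) - ContinuousLinearMap.snd ℝ ℝ ℝ) := by
    rw [hVψ]; exact (key Cψ).fderiv
  -- the RHS
  have hsum : Vφ (y, s) + Vψ (y, s) = A * u ^ (-q) := by
    rw [hVφ, hVψ]; simp only []
    rw [hCφ, hCψ]; ring
  have hupos : (0:ℝ) < u ^ (-q) := Real.rpow_pos_of_pos hu _
  have hRHS : (2 : ℝ) ^ (-p) * (Vφ (y, s) + Vψ (y, s)) ^ p
      = A * q * (1 - α ^ 2) / 2 * u ^ (-q - 1) := by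
    rw [hsum, Real.mul_rpow hA.le hupos.le, ← Real.rpow_mul hu.le]
    have hApow : A ^ p = 2 ^ (p - 1) * q * (1 - α ^ 2) * A := by
      have : A ^ p = A ^ (p - 1) * A ^ (1:ℝ) := by
        rw [← Real.rpow_add hA]; ring_nf
      rw [this, hAe, Real.rpow_one]
    have h2 : (2:ℝ) ^ (-p) * (2:ℝ) ^ (p - 1) = 1 / 2 := by
      rw [← Real.rpow_add (by norm_num : (0:ℝ) < 2)]
      have : -p + (p - 1) = -1 := by ring
      rw [this, Real.rpow_neg_one]
      norm_num
    have huexp : -q * p = -q - 1 := by linarith [hqp]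
    rw [hApow, huexp]
    calc (2:ℝ) ^ (-p) * (2 ^ (p - 1) * q * (1 - α ^ 2) * A * u ^ (-q - 1))
        = ((2:ℝ) ^ (-p) * (2:ℝ) ^ (p - 1)) * (q * (1 - α ^ 2) * A * u ^ (-q - 1)) := by ring
      _ = A * q * (1 - α ^ 2) / 2 * u ^ (-q - 1) := by rw [h2]; ring
  have eval : ∀ (c a b : ℝ),
      ((c • ((α • (ContinuousLinearMap.fst ℝ ℝ ℝ)) - ContinuousLinearMap.snd ℝ ℝ ℝ)) :
        ℝ × ℝ →L[ℝ] ℝ) (a, b) = c * (α * a - b) := by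
    intro c a b
    simp [mul_comm]
  constructor
  · rw [hφ, hRHS, eval, eval, hCφ]; ring
  · rw [hψ, hRHS, eval, eval, hCψ]; ring
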